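/- Let 0 < α ≤ 1, K ≥ 0 and f ∈ Σ(α,K). Then for every j ∈ ℕ, sup_{x ∈ [0,1)} |f(x) − 2^j ∫_{I_{j,⌊2^j x⌋}} f(t) dt| ≤ Σ_{l=j}^{∞} 2^{l/2} * max_{0 ≤ k < 2^l} |∫₀¹ f ψ_{l,k}|, where the series on the right-hand side converges. -/

import Mathlib

/-
Write `A_l f (x)` for the mean of `f` over the generation-`l` dyadic interval containing `x`.
Since `ψ_{l,k}` is `2^{l/2}` times the difference of the indicators of the two halves of
`I_{l,k}`, the increment `A_{l+1} f (x) - A_l f (x)` is `± 2^{l/2} ∫ f ψ_{l,k}` with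
`k = ⌊2^l x⌋`, so the right-hand side bounds the total variation of `(A_l f (x))_{l ≥ j}`.
Hölder continuity gives both `|f - A_l f| ≤ K 2^{-αl}` (hence `A_l f (x) → f (x)`) and
`2^{l/2} |∫ f ψ_{l,k}| ≤ K 2^{-αl}` (hence a geometrically convergent series), and the bound
follows by telescoping.
-/

open MeasureTheory

/-- The dyadic interval `I_{l,k} = [k 2^{-l}, (k+1) 2^{-l})`. -/
def dyadicI (l k : ℕ) : Set ℝ := Set.Ico ((k : ℝ) / 2 ^ l) (((k : ℝ) + 1) / 2 ^ l)

/-- The Haar wavelet `ψ_{l,k}(x) = 2^{l/2} (1_{[1/2,1)} - 1_{[0,1/2)})(2^l x - k)`. -/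
noncomputable def haar (l k : ℕ) (x : ℝ) : ℝ :=
  2 ^ ((l : ℝ) / 2) *
    ((Set.Ico (1 / 2 : ℝ) 1).indicator 1 (2 ^ l * x - k) -
     (Set.Ico (0 : ℝ) (1 / 2 : ℝ)).indicator 1 (2 ^ l * x - k))

open Set Filter Topology
open scoped NNReal ENNReal

section Holder

variable {X E : Type*} [PseudoMetricSpace X] {C r : ℝ≥0}

theorem holderOnWith_of_dist_le [PseudoMetricSpace E] {f : X → E} {s : Set X}
    (h : ∀ x ∈ s, ∀ y ∈ s, dist (f x) (f y) ≤ C * dist x y ^ (r : ℝ)) :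
    HolderOnWith C r f s := by
  intro x hx y hy
  rw [edist_dist, edist_dist, ← ENNReal.ofReal_coe_nnreal,
    ENNReal.ofReal_rpow_of_nonneg dist_nonneg r.coe_nonneg, ← ENNReal.ofReal_mul C.coe_nonneg]
  exact ENNReal.ofReal_le_ofReal (h x hx y hy)

variable [MeasurableSpace X] {μ : Measure X} [NormedAddCommGroup E] {f : X → E} {s : Set X}

theorem HolderOnWith.integrableOn [OpensMeasurableSpace X] [SecondCountableTopologyEither X E]
    (hf : HolderOnWith C r f s) (hr : 0 < r) (hs : MeasurableSet s)
    (hs_bdd : Bornology.IsBounded s) (hμs : μ s ≠ ∞) : IntegrableOn f s μ := by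
  have himage : Bornology.IsBounded (f '' s) :=
    Metric.isBounded_iff_ediam_ne_top.2 <| ne_top_of_le_ne_top
      (ENNReal.mul_ne_top ENNReal.coe_ne_top
        (ENNReal.rpow_ne_top_of_nonneg r.coe_nonneg hs_bdd.ediam_ne_top))
      hf.ediam_image_le
  obtain ⟨M, hM⟩ := isBounded_iff_forall_norm_le.1 himage
  exact ⟨(hf.continuousOn hr).aestronglyMeasurable hs,
    .restrict_of_bounded M hμs.lt_top <|
      ae_restrict_of_forall_mem hs fun x hx => hM _ (mem_image_of_mem f hx)⟩

theorem HolderOnWith.norm_setIntegral_sub_smul_le [NormedSpace ℝ E] [CompleteSpace E]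
    (hf : HolderOnWith C r f s) {I : Set X} (hI : I ⊆ s) (hμI : μ I < ∞)
    (hfI : IntegrableOn f I μ) {p : X} (hp : p ∈ s) {d : ℝ} (hd : ∀ t ∈ I, dist t p ≤ d) :
    ‖(∫ t in I, f t ∂μ) - μ.real I • f p‖ ≤ C * d ^ (r : ℝ) * μ.real I := by
  rw [← setIntegral_const, ← integral_sub hfI (integrableOn_const hμI.ne)]
  refine norm_setIntegral_le_of_norm_le_const hμI fun t ht => ?_
  rw [← dist_eq_norm]
  exact hf.dist_le_of_le (hI ht) hp (hd t ht)

end Holder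

theorem mem_dyadicI_iff {l k : ℕ} {x : ℝ} :
    x ∈ dyadicI l k ↔ (k : ℝ) ≤ 2 ^ l * x ∧ 2 ^ l * x < k + 1 := by
  have h : (0 : ℝ) < 2 ^ l := by positivity
  rw [dyadicI, mem_Ico, div_le_iff₀ h, lt_div_iff₀ h, mul_comm x]

theorem measurableSet_dyadicI (l k : ℕ) : MeasurableSet (dyadicI l k) := measurableSet_Ico

theorem volume_real_dyadicI (l k : ℕ) : volume.real (dyadicI l k) = (2 ^ l)⁻¹ := by
  rw [dyadicI, Real.volume_real_Ico, ← sub_div, add_sub_cancel_left, one_div,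
    max_eq_left (by positivity)]

theorem dyadicI_subset_Ico {l k : ℕ} (hk : k < 2 ^ l) : dyadicI l k ⊆ Ico 0 1 := by
  refine Ico_subset_Ico (by positivity) ((div_le_one (by positivity)).2 ?_)
  exact_mod_cast hk

theorem dyadicI_eq_union (l k : ℕ) :
    dyadicI l k = dyadicI (l + 1) (2 * k) ∪ dyadicI (l + 1) (2 * k + 1) := by
  ext x
  simp only [mem_union, mem_dyadicI_iff, pow_succ]
  push_cast
  constructor
  · rintro ⟨h₁, h₂⟩
    by_cases h : 2 ^ l * 2 * x < 2 * k + 1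
    · exact .inl ⟨by linarith, h⟩
    · exact .inr ⟨by linarith, by linarith⟩
  · rintro (⟨h₁, h₂⟩ | ⟨h₁, h₂⟩) <;> constructor <;> linarith

theorem disjoint_dyadicI_two_mul (l k : ℕ) :
    Disjoint (dyadicI (l + 1) (2 * k)) (dyadicI (l + 1) (2 * k + 1)) :=
  disjoint_left.2 fun x h₁ h₂ => by
    rw [mem_dyadicI_iff] at h₁ h₂
    push_cast at h₁ h₂
    linarith

theorem haar_eq_indicator (l k : ℕ) (t : ℝ) :
    haar l k t = 2 ^ ((l : ℝ) / 2) *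
      ((dyadicI (l + 1) (2 * k + 1)).indicator 1 t - (dyadicI (l + 1) (2 * k)).indicator 1 t) := by
  have hright : 2 ^ l * t - k ∈ Ico (1 / 2 : ℝ) 1 ↔ t ∈ dyadicI (l + 1) (2 * k + 1) := by
    rw [mem_dyadicI_iff, mem_Ico, pow_succ]
    push_cast
    constructor <;> rintro ⟨h₁, h₂⟩ <;> constructor <;> linarith
  have hleft : 2 ^ l * t - k ∈ Ico (0 : ℝ) (1 / 2) ↔ t ∈ dyadicI (l + 1) (2 * k) := by
    rw [mem_dyadicI_iff, mem_Ico, pow_succ]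
    push_cast
    constructor <;> rintro ⟨h₁, h₂⟩ <;> constructor <;> linarith
  classical
  rw [haar, indicator_apply, indicator_apply, indicator_apply, indicator_apply]
  simp only [hright, hleft, Pi.one_apply]

theorem two_pow_half_mul_integral_mul_haar {f : ℝ → ℝ} (hf : IntegrableOn f (Ico 0 1))
    {l k : ℕ} (hk : k < 2 ^ l) :
    2 ^ ((l : ℝ) / 2) * ∫ t in Ico 0 1, f t * haar l k t =
      2 ^ l * ((∫ t in dyadicI (l + 1) (2 * k + 1), f t) -
        ∫ t in dyadicI (l + 1) (2 * k), f t) := by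
  have hright : dyadicI (l + 1) (2 * k + 1) ⊆ Ico 0 1 :=
    dyadicI_subset_Ico (by rw [pow_succ]; omega)
  have hleft : dyadicI (l + 1) (2 * k) ⊆ Ico 0 1 := dyadicI_subset_Ico (by rw [pow_succ]; omega)
  have hpointwise : ∀ t, f t * haar l k t = 2 ^ ((l : ℝ) / 2) *
      ((dyadicI (l + 1) (2 * k + 1)).indicator f t - (dyadicI (l + 1) (2 * k)).indicator f t) := by
    intro t
    classical
    rw [haar_eq_indicator, indicator_apply, indicator_apply, indicator_apply, indicator_apply]
    split_ifs <;> simp [mul_comm]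
  simp_rw [hpointwise]
  rw [integral_const_mul, ← mul_assoc, ← Real.rpow_add two_pos, add_halves, Real.rpow_natCast,
    integral_sub ((hf.mono_set hright).integrable_indicator (measurableSet_dyadicI _ _)).restrict
      ((hf.mono_set hleft).integrable_indicator (measurableSet_dyadicI _ _)).restrict,
    setIntegral_indicator (measurableSet_dyadicI _ _),
    setIntegral_indicator (measurableSet_dyadicI _ _),
    inter_eq_right.2 hright, inter_eq_right.2 hleft]

theorem floor_two_pow_mul_lt {x : ℝ} (hx : x ∈ Ico (0 : ℝ) 1) (l : ℕ) :
    ⌊(2 : ℝ) ^ l * x⌋₊ < 2 ^ l := by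
  rw [Nat.floor_lt (mul_nonneg (by positivity) hx.1)]
  push_cast
  exact mul_lt_of_lt_one_right (by positivity) hx.2

theorem floor_two_pow_succ_mul_div_two (l : ℕ) (x : ℝ) :
    ⌊(2 : ℝ) ^ (l + 1) * x⌋₊ / 2 = ⌊(2 : ℝ) ^ l * x⌋₊ := by
  rw [← Nat.floor_div_natCast, pow_succ]
  congr 1
  push_cast
  ring

noncomputable def dyadicAverage (f : ℝ → ℝ) (l : ℕ) (x : ℝ) : ℝ :=
  2 ^ l * ∫ t in dyadicI l ⌊(2 : ℝ) ^ l * x⌋₊, f t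

theorem abs_dyadicAverage_succ_sub {f : ℝ → ℝ} (hf : IntegrableOn f (Ico 0 1)) {x : ℝ}
    (hx : x ∈ Ico (0 : ℝ) 1) (l : ℕ) :
    |dyadicAverage f (l + 1) x - dyadicAverage f l x| =
      2 ^ ((l : ℝ) / 2) * |∫ t in Ico 0 1, f t * haar l ⌊(2 : ℝ) ^ l * x⌋₊ t| := by
  obtain ⟨k, hchild⟩ := Nat.even_or_odd' ⌊(2 : ℝ) ^ (l + 1) * x⌋₊
  have hparent_index : ⌊(2 : ℝ) ^ l * x⌋₊ = k := by
    rw [← floor_two_pow_succ_mul_div_two]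
    rcases hchild with h | h <;> rw [h] <;> omega
  have hk : k < 2 ^ l := hparent_index ▸ floor_two_pow_mul_lt hx l
  set L := ∫ t in dyadicI (l + 1) (2 * k), f t
  set R := ∫ t in dyadicI (l + 1) (2 * k + 1), f t
  have hparent : dyadicAverage f l x = 2 ^ l * (L + R) := by
    rw [dyadicAverage, hparent_index, dyadicI_eq_union,
      setIntegral_union (disjoint_dyadicI_two_mul l k) (measurableSet_dyadicI _ _)
        (hf.mono_set (dyadicI_subset_Ico (by rw [pow_succ]; omega)))
        (hf.mono_set (dyadicI_subset_Ico (by rw [pow_succ]; omega)))]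
  rw [← abs_of_pos (by positivity : (0 : ℝ) < 2 ^ ((l : ℝ) / 2)), ← abs_mul, hparent_index,
    two_pow_half_mul_integral_mul_haar hf hk, hparent]
  rcases hchild with hchild | hchild
  · rw [dyadicAverage, hchild, ← abs_neg]
    congr 1
    ring
  · rw [dyadicAverage, hchild]
    congr 1
    ring

noncomputable def haarCoeffSup (f : ℝ → ℝ) (l : ℕ) : ℝ :=
  ⨆ k : Fin (2 ^ l), |∫ t in Ico (0 : ℝ) 1, f t * haar l k t|

theorem haarCoeffSup_nonneg (f : ℝ → ℝ) (l : ℕ) : 0 ≤ haarCoeffSup f l :=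
  Real.iSup_nonneg fun _ => abs_nonneg _

theorem abs_integral_mul_haar_le_haarCoeffSup (f : ℝ → ℝ) {l k : ℕ} (hk : k < 2 ^ l) :
    |∫ t in Ico (0 : ℝ) 1, f t * haar l k t| ≤ haarCoeffSup f l :=
  le_ciSup (f := fun i : Fin (2 ^ l) => |∫ t in Ico (0 : ℝ) 1, f t * haar l i t|)
    (Finite.bddAbove_range _) ⟨k, hk⟩

theorem dist_dyadicAverage_succ_le {f : ℝ → ℝ} (hf : IntegrableOn f (Ico 0 1)) {x : ℝ}
    (hx : x ∈ Ico (0 : ℝ) 1) (l : ℕ) :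
    dist (dyadicAverage f l x) (dyadicAverage f (l + 1) x) ≤
      2 ^ ((l : ℝ) / 2) * haarCoeffSup f l := by
  rw [dist_comm, Real.dist_eq, abs_dyadicAverage_succ_sub hf hx]
  exact mul_le_mul_of_nonneg_left
    (abs_integral_mul_haar_le_haarCoeffSup f (floor_two_pow_mul_lt hx l)) (by positivity)

section HolderEstimates

variable {C r : ℝ≥0} {f : ℝ → ℝ}

theorem HolderOnWith.integrableOn_Ico {a b : ℝ} (hf : HolderOnWith C r f (Ico a b)) (hr : 0 < r) :
    IntegrableOn f (Ico a b) :=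
  hf.integrableOn hr measurableSet_Ico (Metric.isBounded_Ico a b) measure_Ico_lt_top.ne

theorem abs_two_pow_mul_setIntegral_dyadicI_sub_le (hf : HolderOnWith C r f (Ico 0 1))
    (hr : 0 < r) {l k : ℕ} {p : ℝ} (hp : p ∈ Ico (0 : ℝ) 1) (hkp : (k : ℝ) ≤ 2 ^ l * p)
    (hpk : 2 ^ l * p ≤ k + 1) :
    |2 ^ l * (∫ t in dyadicI l k, f t) - f p| ≤ C * ((2 ^ (r : ℝ))⁻¹) ^ l := by
  have hpow : (0 : ℝ) < 2 ^ l := by positivity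
  have hk : k < 2 ^ l := by
    exact_mod_cast hkp.trans_lt (mul_lt_of_lt_one_right hpow hp.2)
  have hI := dyadicI_subset_Ico hk
  have hdist : ∀ t ∈ dyadicI l k, dist t p ≤ (2 ^ l)⁻¹ := by
    intro t ht
    rw [mem_dyadicI_iff] at ht
    rw [Real.dist_eq, ← mul_le_mul_iff_right₀ hpow, ← abs_of_pos hpow, ← abs_mul,
      abs_of_pos hpow, mul_inv_cancel₀ hpow.ne', mul_sub, abs_le]
    constructor <;> linarith
  have hmean := hf.norm_setIntegral_sub_smul_le hI (measure_Ico_lt_top (μ := volume))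
    ((hf.integrableOn_Ico hr).mono_set hI) hp hdist
  rw [volume_real_dyadicI, Real.norm_eq_abs, smul_eq_mul] at hmean
  calc |2 ^ l * (∫ t in dyadicI l k, f t) - f p|
      = 2 ^ l * |(∫ t in dyadicI l k, f t) - (2 ^ l)⁻¹ * f p| := by
        rw [← abs_of_pos hpow, ← abs_mul, abs_of_pos hpow, mul_sub, mul_inv_cancel_left₀ hpow.ne']
    _ ≤ 2 ^ l * (C * ((2 ^ l)⁻¹) ^ (r : ℝ) * (2 ^ l)⁻¹) := by gcongr
    _ = C * ((2 ^ (r : ℝ))⁻¹) ^ l := by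
        rw [Real.inv_rpow hpow.le, ← Real.rpow_pow_comm zero_le_two, inv_pow]
        field_simp

theorem abs_sub_dyadicAverage_le (hf : HolderOnWith C r f (Ico 0 1)) (hr : 0 < r) {x : ℝ}
    (hx : x ∈ Ico (0 : ℝ) 1) (l : ℕ) :
    |f x - dyadicAverage f l x| ≤ C * ((2 ^ (r : ℝ))⁻¹) ^ l := by
  rw [abs_sub_comm]
  exact abs_two_pow_mul_setIntegral_dyadicI_sub_le hf hr hx
    (Nat.floor_le (mul_nonneg (by positivity) hx.1)) (Nat.lt_floor_add_one _).le

theorem tendsto_dyadicAverage (hf : HolderOnWith C r f (Ico 0 1)) (hr : 0 < r) {x : ℝ}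
    (hx : x ∈ Ico (0 : ℝ) 1) : Tendsto (fun l => dyadicAverage f l x) atTop (𝓝 (f x)) := by
  have hρ : ((2 : ℝ) ^ (r : ℝ))⁻¹ < 1 := inv_lt_one_of_one_lt₀ (Real.one_lt_rpow one_lt_two hr)
  refine tendsto_iff_dist_tendsto_zero.2 <| squeeze_zero (fun _ => dist_nonneg) (fun l => ?_)
    (by simpa only [mul_zero] using
      (tendsto_pow_atTop_nhds_zero_of_lt_one (by positivity) hρ).const_mul (C : ℝ))
  rw [dist_comm, Real.dist_eq]
  exact abs_sub_dyadicAverage_le hf hr hx l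

-- Both halves of `I_{l,k}` are compared with `f` at their common endpoint.
theorem two_pow_half_mul_abs_integral_mul_haar_le (hf : HolderOnWith C r f (Ico 0 1))
    (hr : 0 < r) {l k : ℕ} (hk : k < 2 ^ l) :
    2 ^ ((l : ℝ) / 2) * |∫ t in Ico 0 1, f t * haar l k t| ≤ C * ((2 ^ (r : ℝ))⁻¹) ^ l := by
  set p : ℝ := (2 * k + 1) / 2 ^ (l + 1)
  have hmid : 2 ^ (l + 1) * p = 2 * k + 1 := mul_div_cancel₀ _ (by positivity)
  have hp : p ∈ Ico (0 : ℝ) 1 := by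
    refine ⟨by positivity, (div_lt_one (by positivity)).2 ?_⟩
    exact_mod_cast (show 2 * k + 1 < 2 ^ (l + 1) by rw [pow_succ]; omega)
  have hright := abs_two_pow_mul_setIntegral_dyadicI_sub_le hf hr (k := 2 * k + 1) hp
    (by push_cast; linarith) (by push_cast; linarith)
  have hleft := abs_two_pow_mul_setIntegral_dyadicI_sub_le hf hr (k := 2 * k) hp
    (by push_cast; linarith) (by push_cast; linarith)
  have hρ : ((2 : ℝ) ^ (r : ℝ))⁻¹ ^ (l + 1) ≤ ((2 : ℝ) ^ (r : ℝ))⁻¹ ^ l :=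
    pow_le_pow_of_le_one (by positivity)
      (inv_le_one_of_one_le₀ (Real.one_le_rpow one_le_two r.coe_nonneg)) l.le_succ
  rw [← abs_of_pos (by positivity : (0 : ℝ) < 2 ^ ((l : ℝ) / 2)), ← abs_mul,
    two_pow_half_mul_integral_mul_haar (hf.integrableOn_Ico hr) hk]
  set R := ∫ t in dyadicI (l + 1) (2 * k + 1), f t
  set L := ∫ t in dyadicI (l + 1) (2 * k), f t
  calc |2 ^ l * (R - L)| = |(2 ^ (l + 1) * R - f p) - (2 ^ (l + 1) * L - f p)| / 2 := by
        rw [show (2 ^ (l + 1) * R - f p) - (2 ^ (l + 1) * L - f p) = 2 * (2 ^ l * (R - L)) by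
          ring, abs_mul 2, abs_two]
        ring
    _ ≤ (C * ((2 ^ (r : ℝ))⁻¹) ^ (l + 1) + C * ((2 ^ (r : ℝ))⁻¹) ^ (l + 1)) / 2 := by
        gcongr
        exact (abs_sub _ _).trans (add_le_add hright hleft)
    _ ≤ C * ((2 ^ (r : ℝ))⁻¹) ^ l := by
        rw [add_self_div_two]
        gcongr

theorem two_pow_half_mul_haarCoeffSup_le (hf : HolderOnWith C r f (Ico 0 1)) (hr : 0 < r)
    (l : ℕ) :
    2 ^ ((l : ℝ) / 2) * haarCoeffSup f l ≤ C * ((2 ^ (r : ℝ))⁻¹) ^ l := by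
  rw [haarCoeffSup, Real.mul_iSup_of_nonneg (by positivity)]
  exact ciSup_le fun k => two_pow_half_mul_abs_integral_mul_haar_le hf hr k.2

theorem summable_two_pow_half_mul_haarCoeffSup (hf : HolderOnWith C r f (Ico 0 1))
    (hr : 0 < r) : Summable fun l : ℕ => 2 ^ ((l : ℝ) / 2) * haarCoeffSup f l :=
  .of_nonneg_of_le (fun l => mul_nonneg (by positivity) (haarCoeffSup_nonneg f l))
    (two_pow_half_mul_haarCoeffSup_le hf hr)
    ((summable_geometric_of_lt_one (by positivity)
      (inv_lt_one_of_one_lt₀ (Real.one_lt_rpow one_lt_two hr))).mul_left (C : ℝ))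

end HolderEstimates

theorem stmt_6_general (α K : ℝ) (hα : 0 < α) (hK : 0 ≤ K) (f : ℝ → ℝ)
    (hf : ∀ x ∈ Set.Ico (0 : ℝ) 1, ∀ y ∈ Set.Ico (0 : ℝ) 1, |f x - f y| ≤ K * |x - y| ^ α)
    (j : ℕ) :
    (Summable fun m : ℕ => 2 ^ (((j + m : ℕ) : ℝ) / 2) *
        ⨆ k : Fin (2 ^ (j + m)), |∫ t in Set.Ico (0 : ℝ) 1, f t * haar (j + m) (k : ℕ) t|) ∧
    ∀ x ∈ Set.Ico (0 : ℝ) 1,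
      |f x - 2 ^ j * ∫ t in dyadicI j ⌊2 ^ j * x⌋₊, f t| ≤
        ∑' m : ℕ, 2 ^ (((j + m : ℕ) : ℝ) / 2) *
          ⨆ k : Fin (2 ^ (j + m)), |∫ t in Set.Ico (0 : ℝ) 1, f t * haar (j + m) (k : ℕ) t| := by
  set C := K.toNNReal
  set r := α.toNNReal
  have hH : HolderOnWith C r f (Ico 0 1) := holderOnWith_of_dist_le <| by
    simpa only [C, r, Real.coe_toNNReal K hK, Real.coe_toNNReal α hα.le, Real.dist_eq] using hf
  have hr : 0 < r := Real.toNNReal_pos.2 hα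
  have hsum := (summable_two_pow_half_mul_haarCoeffSup hH hr).comp_injective (add_right_injective j)
  refine ⟨hsum, fun x hx => ?_⟩
  have hbound := dist_le_tsum_of_dist_le_of_tendsto₀ _
    (fun m => dist_dyadicAverage_succ_le (hH.integrableOn_Ico hr) hx (j + m)) hsum
    ((tendsto_dyadicAverage hH hr hx).comp (tendsto_atTop_mono (Nat.le_add_left · j) tendsto_id))
  rwa [add_zero, dist_comm, Real.dist_eq] at hbound

/-- If `f ∈ Σ(α,K)` with `0 < α ≤ 1`, `K ≥ 0`, then for every `j`,
`sup_{x ∈ [0,1)} |f(x) - 2^j ∫_{I_{j,⌊2^j x⌋}} f| ≤ Σ_{l ≥ j} 2^{l/2} max_{k<2^l} |∫₀¹ f ψ_{l,k}|`,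
the series on the right being convergent (we index `l = j + m`, `m ∈ ℕ`). -/
theorem stmt_6 (α K : ℝ) (hα : 0 < α) (hα1 : α ≤ 1) (hK : 0 ≤ K) (f : ℝ → ℝ)
    (hf : ∀ x ∈ Set.Ico (0 : ℝ) 1, ∀ y ∈ Set.Ico (0 : ℝ) 1, |f x - f y| ≤ K * |x - y| ^ α)
    (j : ℕ) :
    (Summable fun m : ℕ => 2 ^ (((j + m : ℕ) : ℝ) / 2) *
        ⨆ k : Fin (2 ^ (j + m)), |∫ t in Set.Ico (0 : ℝ) 1, f t * haar (j + m) (k : ℕ) t|) ∧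
    ∀ x ∈ Set.Ico (0 : ℝ) 1,
      |f x - 2 ^ j * ∫ t in dyadicI j ⌊2 ^ j * x⌋₊, f t| ≤
        ∑' m : ℕ, 2 ^ (((j + m : ℕ) : ℝ) / 2) *
          ⨆ k : Fin (2 ^ (j + m)), |∫ t in Set.Ico (0 : ℝ) 1, f t * haar (j + m) (k : ℕ) t| :=
  stmt_6_general α K hα hK f hf j
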